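/- Let Φ ∈ ℝ^{m×n}, let T ⊆ {1,…,n} with #T = s, and let k ≥ 1. Assume Φ satisfies the RIP of order s+2k with radius δ_{s+2k} ∈ (0,1) and the RIP of order 2k with radius δ_{2k} ∈ (0,1), and that δ_{2k}² + 2δ_{s+2k} < 1. Let x ∈ ℝⁿ, ε ≥ 0, y ∈ ℝᵐ with ‖y − Φx‖₂ ≤ ε, and let x* solve iBPDN. Set h = x* − x and r = x − x_T. Let T₀ ⊆ Tᶜ with #T₀ = k be a set of k largest-magnitude entries of r, let T_{|0} = T ∪ T₀, let T₁ ⊆ T_{|0}ᶜ with #T₁ = k be a set of k largest-magnitude entries of h_{T_{|0}ᶜ}, and let μ = √(δ_{s+2k}² + δ_{2k}²). Then ‖h_{T ∪ T₀ ∪ T₁}‖₂ ≤ α·ε + β·k^{−1/2}‖r − r_{T₀}‖₁, where α = 2√(1+δ_{s+2k})/(1 − δ_{s+2k} − μ) and β = 2μ/(1 − δ_{s+2k} − μ). -/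

import Mathlib

open scoped BigOperators

/-- The Euclidean (ℓ₂) norm of a vector. -/
noncomputable def l2 {d : ℕ} (u : Fin d → ℝ) : ℝ := Real.sqrt (∑ i, (u i) ^ 2)

/-- The ℓ₁ norm of a vector. -/
noncomputable def l1 {d : ℕ} (u : Fin d → ℝ) : ℝ := ∑ i, |u i|

/-- `restr S u` equals `u` on `S` and `0` outside `S`. -/
def restr {n : ℕ} (S : Finset (Fin n)) (u : Fin n → ℝ) : Fin n → ℝ :=
  fun i => if i ∈ S then u i else 0

/-- Restricted Isometry Property of order `q` with radius `δ`. -/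
def RIP {m n : ℕ} (Φ : Matrix (Fin m) (Fin n) ℝ) (q : ℕ) (δ : ℝ) : Prop :=
  ∀ u : Fin n → ℝ, (Function.support u).ncard ≤ q →
    (1 - δ) * (l2 u) ^ 2 ≤ (l2 (Φ.mulVec u)) ^ 2 ∧
    (l2 (Φ.mulVec u)) ^ 2 ≤ (1 + δ) * (l2 u) ^ 2

/-- `xs` solves the innovative Basis Pursuit DeNoise program. -/
def solvesIBPDN {m n : ℕ} (Φ : Matrix (Fin m) (Fin n) ℝ) (y : Fin m → ℝ) (ε : ℝ)
    (T : Finset (Fin n)) (xs : Fin n → ℝ) : Prop :=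
  l2 (y - Φ.mulVec xs) ≤ ε ∧
  ∀ u : Fin n → ℝ, l2 (y - Φ.mulVec u) ≤ ε → l1 (restr Tᶜ xs) ≤ l1 (restr Tᶜ u)

/-- `S` is a set of largest-magnitude entries of `r`. -/
def isLargest {n : ℕ} (r : Fin n → ℝ) (S : Finset (Fin n)) : Prop :=
  ∀ i ∈ S, ∀ j ∉ S, |r j| ≤ |r i|

/-!
Write `h = x* - x` and `a = h_{T ∪ T₀ ∪ T₁}`. Feasibility of `x` and `x*` gives the tube constraint
`‖Φh‖₂ ≤ 2ε`, and ℓ₁-minimality of `x*` off `T` gives the cone constraint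
`‖h_{(T ∪ T₀)ᶜ}‖₁ ≤ ‖h_{T₀}‖₁ + 2‖r - r_{T₀}‖₁`. By the RIP,
`(1 - δ_{s+2k})‖a‖² ≤ ‖Φa‖² = ⟪Φa, Φh⟫ - ⟪Φa, Φh_{rest}⟫`, and the first term is at most
`√(1 + δ_{s+2k}) ‖a‖ 2ε`. Cut the rest into blocks of `k` largest entries: each block is nearly
orthogonal to `Φh_{T ∪ T₀}` (RIP of order `s + 2k`) and to `Φh_{T₁}` (order `2k`), which costs
`μ‖a‖` per unit of the block's ℓ₂ norm by Cauchy–Schwarz in `ℝ²`. Shelling bounds the sum of the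
block norms by `‖h_{(T ∪ T₀)ᶜ}‖₁ / √k`, which the cone constraint and `‖h_{T₀}‖₁ ≤ √k ‖a‖` turn
into `‖a‖ + 2‖r - r_{T₀}‖₁ / √k`; dividing by `‖a‖` gives the claim.
-/

open Matrix Finset Function

section Norms

variable {d : ℕ}

lemma l2_eq_norm (u : Fin d → ℝ) : l2 u = ‖WithLp.toLp 2 u‖ := by
  simp [l2, EuclideanSpace.norm_eq, sq_abs]

lemma l2_nonneg (u : Fin d → ℝ) : 0 ≤ l2 u := Real.sqrt_nonneg _

lemma l1_nonneg (u : Fin d → ℝ) : 0 ≤ l1 u := sum_nonneg fun _ _ => abs_nonneg _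

lemma l2_sq (u : Fin d → ℝ) : l2 u ^ 2 = u ⬝ᵥ u := by
  rw [l2, Real.sq_sqrt (by positivity)]
  simp [dotProduct, sq]

lemma l2_eq_zero_iff {u : Fin d → ℝ} : l2 u = 0 ↔ u = 0 := by
  rw [l2_eq_norm, norm_eq_zero, WithLp.toLp_eq_zero]

lemma l2_sub_le (u v : Fin d → ℝ) : l2 (u - v) ≤ l2 u + l2 v := by
  simpa only [l2_eq_norm, WithLp.toLp_sub] using norm_sub_le _ _

lemma l2_smul (c : ℝ) (u : Fin d → ℝ) : l2 (c • u) = |c| * l2 u := by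
  rw [l2_eq_norm, l2_eq_norm, WithLp.toLp_smul, norm_smul, Real.norm_eq_abs]

lemma abs_dotProduct_le (u v : Fin d → ℝ) : |u ⬝ᵥ v| ≤ l2 u * l2 v := by
  have := abs_real_inner_le_norm (WithLp.toLp 2 v) (WithLp.toLp 2 u)
  rwa [EuclideanSpace.inner_eq_star_dotProduct, ← l2_eq_norm, ← l2_eq_norm, mul_comm] at this

lemma mul_add_mul_le_sqrt_mul_sqrt (a b x y : ℝ) :
    a * x + b * y ≤ √(a ^ 2 + b ^ 2) * √(x ^ 2 + y ^ 2) := by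
  have := (le_abs_self _).trans (abs_dotProduct_le ![a, b] ![x, y])
  simpa [l2, dotProduct, Fin.sum_univ_two] using this

end Norms

section Restriction

variable {n : ℕ}

lemma support_restr_subset (S : Finset (Fin n)) (u : Fin n → ℝ) : support (restr S u) ⊆ S :=
  support_subset_iff'.2 fun _ hi => if_neg hi

lemma restr_union {S W : Finset (Fin n)} (hSW : Disjoint S W) (u : Fin n → ℝ) :
    restr (S ∪ W) u = restr S u + restr W u := by
  funext i
  by_cases hi : i ∈ S
  · simp [restr, hi, disjoint_left.1 hSW hi]
  · simp [restr, hi]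

lemma restr_add_restr_compl (S : Finset (Fin n)) (u : Fin n → ℝ) : restr S u + restr Sᶜ u = u := by
  funext i
  by_cases hi : i ∈ S <;> simp [restr, hi]

lemma l1_restr (S : Finset (Fin n)) (u : Fin n → ℝ) : l1 (restr S u) = ∑ i ∈ S, |u i| := by
  simp [l1, restr, apply_ite, sum_ite_mem]

lemma l2_restr (S : Finset (Fin n)) (u : Fin n → ℝ) : l2 (restr S u) = √(∑ i ∈ S, u i ^ 2) := by
  simp [l2, restr, ite_pow, sum_ite_mem]

lemma l1_restr_union {S W : Finset (Fin n)} (hSW : Disjoint S W) (u : Fin n → ℝ) :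
    l1 (restr (S ∪ W) u) = l1 (restr S u) + l1 (restr W u) := by
  simp only [l1_restr, sum_union hSW]

lemma l2_restr_union_sq {S W : Finset (Fin n)} (hSW : Disjoint S W) (u : Fin n → ℝ) :
    l2 (restr (S ∪ W) u) ^ 2 = l2 (restr S u) ^ 2 + l2 (restr W u) ^ 2 := by
  simp only [l2_restr, sum_union hSW]
  rw [Real.sq_sqrt (by positivity), Real.sq_sqrt (by positivity), Real.sq_sqrt (by positivity)]

lemma l2_restr_mono {S W : Finset (Fin n)} (hSW : S ⊆ W) (u : Fin n → ℝ) :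
    l2 (restr S u) ≤ l2 (restr W u) := by
  rw [l2_restr, l2_restr]
  exact Real.sqrt_le_sqrt (sum_le_sum_of_subset_of_nonneg hSW fun _ _ _ => sq_nonneg _)

lemma l1_restr_le_sqrt_card_mul_l2 (S : Finset (Fin n)) (u : Fin n → ℝ) :
    l1 (restr S u) ≤ √S.card * l2 (restr S u) := by
  rw [l1_restr, l2_restr, ← Real.sqrt_mul (Nat.cast_nonneg _)]
  apply Real.le_sqrt_of_sq_le
  simpa [sq_abs] using sq_sum_le_card_mul_sum_sq (s := S) (f := fun i => |u i|)

lemma l2_restr_le_sqrt_card_mul {S : Finset (Fin n)} {u : Fin n → ℝ} {b : ℝ} (hb : 0 ≤ b)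
    (hu : ∀ i ∈ S, |u i| ≤ b) : l2 (restr S u) ≤ √S.card * b := by
  rw [l2_restr, ← Real.sqrt_sq hb, ← Real.sqrt_mul (Nat.cast_nonneg _)]
  refine Real.sqrt_le_sqrt ((sum_le_card_nsmul S _ _ fun i hi => ?_).trans_eq (nsmul_eq_mul _ _))
  simpa [sq_abs] using pow_le_pow_left₀ (abs_nonneg _) (hu i hi) 2

lemma card_mul_abs_le_l1_restr {S : Finset (Fin n)} {u : Fin n → ℝ} {i : Fin n}
    (hu : ∀ j ∈ S, |u i| ≤ |u j|) : S.card * |u i| ≤ l1 (restr S u) := by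
  rw [l1_restr, ← nsmul_eq_mul]
  exact card_nsmul_le_sum S _ _ hu

lemma exists_subset_card_eq_abs_le (u : Fin n → ℝ) {R : Finset (Fin n)} {k : ℕ} (hk : k ≤ R.card) :
    ∃ S ⊆ R, S.card = k ∧ ∀ i ∈ S, ∀ j ∈ R \ S, |u j| ≤ |u i| := by
  obtain ⟨S, hS, hmax⟩ := (R.powersetCard k).exists_max_image (fun S => ∑ i ∈ S, |u i|)
    (powersetCard_nonempty.2 hk)
  obtain ⟨hSR, hSk⟩ := mem_powersetCard.1 hS
  refine ⟨S, hSR, hSk, fun i hi j hj => not_lt.1 fun hij => ?_⟩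
  obtain ⟨hjR, hjS⟩ := mem_sdiff.1 hj
  have hswap : insert j (S.erase i) ∈ R.powersetCard k := by
    refine mem_powersetCard.2 ⟨insert_subset hjR ((erase_subset _ _).trans hSR), ?_⟩
    rw [card_insert_of_notMem fun h => hjS (mem_of_mem_erase h), card_erase_of_mem hi,
      Nat.sub_add_cancel (card_pos.2 ⟨i, hi⟩), hSk]
  have := hmax _ hswap
  rw [sum_insert fun h => hjS (mem_of_mem_erase h), sum_erase_eq_sub hi] at this
  linarith

end Restriction

/-- Shelling: split `R` into successive blocks of the `k` largest remaining entries of `u`; every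
entry of a block is at most the previous block's ℓ₁ mass divided by `k`, so the ℓ₂ norms of the
blocks sum to at most `√k * b + ‖u_R‖₁ / √k`. -/
lemma le_of_le_l2_restr_blocks {n k : ℕ} (hk : 1 ≤ k) {u : Fin n → ℝ} {M : ℝ} (hM : 0 ≤ M)
    (F : Finset (Fin n) → ℝ) (hF : ∀ S W, Disjoint S W → F (S ∪ W) ≤ F S + F W)
    (R : Finset (Fin n)) (hblock : ∀ W ⊆ R, W.card ≤ k → F W ≤ M * l2 (restr W u))
    {b : ℝ} (hb : 0 ≤ b) (hbR : ∀ i ∈ R, |u i| ≤ b) :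
    F R ≤ M * (√k * b + (√k)⁻¹ * l1 (restr R u)) := by
  induction R using Finset.strongInduction generalizing b with
  | H R ih =>
  have hk' : (0 : ℝ) < k := by exact_mod_cast hk
  by_cases hRk : R.card ≤ k
  · have hR : l2 (restr R u) ≤ √k * b :=
      (l2_restr_le_sqrt_card_mul hb hbR).trans
        (mul_le_mul_of_nonneg_right (Real.sqrt_le_sqrt (by exact_mod_cast hRk)) hb)
    have hl1 : 0 ≤ (√k)⁻¹ * l1 (restr R u) := mul_nonneg (by positivity) (l1_nonneg _)
    exact (hblock R subset_rfl hRk).trans (mul_le_mul_of_nonneg_left (by linarith) hM)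
  obtain ⟨S, hSR, hSk, hSmax⟩ := exists_subset_card_eq_abs_le u (not_le.1 hRk).le
  have hS : F S ≤ M * (√k * b) :=
    (hblock S hSR hSk.le).trans <| mul_le_mul_of_nonneg_left
      ((l2_restr_le_sqrt_card_mul hb fun i hi => hbR i (hSR hi)).trans_eq (by rw [hSk])) hM
  have hrest := ih (R \ S) (sdiff_ssubset hSR (card_pos.1 (by omega)))
    (fun W hW => hblock W (hW.trans sdiff_subset)) (b := (k : ℝ)⁻¹ * l1 (restr S u))
    (mul_nonneg (by positivity) (l1_nonneg _)) fun i hi => by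
      rw [inv_mul_eq_div, le_div_iff₀ hk', mul_comm, ← hSk]
      exact card_mul_abs_le_l1_restr fun j hj => hSmax j hj i hi
  have hsplit : l1 (restr R u) = l1 (restr S u) + l1 (restr (R \ S) u) := by
    rw [← l1_restr_union disjoint_sdiff, union_sdiff_of_subset hSR]
  have hkk : √k * (k : ℝ)⁻¹ = (√k)⁻¹ := by rw [← div_eq_mul_inv, Real.sqrt_div_self]
  calc F R = F (S ∪ R \ S) := by rw [union_sdiff_of_subset hSR]
    _ ≤ F S + F (R \ S) := hF _ _ disjoint_sdiff
    _ ≤ M * (√k * b) + M * (√k * ((k : ℝ)⁻¹ * l1 (restr S u)) + (√k)⁻¹ * l1 (restr (R \ S) u)) :=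
      add_le_add hS hrest
    _ = M * (√k * b + (√k)⁻¹ * l1 (restr R u)) := by rw [hsplit, ← hkk]; ring

namespace RIP

variable {m n q : ℕ} {Φ : Matrix (Fin m) (Fin n) ℝ} {δ : ℝ}

lemma mono (hΦ : RIP Φ q δ) {q' : ℕ} (hq : q' ≤ q) : RIP Φ q' δ :=
  fun u hu => hΦ u (hu.trans hq)

lemma of_support_subset (hΦ : RIP Φ q δ) {u : Fin n → ℝ} {S : Finset (Fin n)}
    (hu : support u ⊆ S) (hS : S.card ≤ q) :
    (1 - δ) * l2 u ^ 2 ≤ l2 (Φ *ᵥ u) ^ 2 ∧ l2 (Φ *ᵥ u) ^ 2 ≤ (1 + δ) * l2 u ^ 2 :=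
  hΦ u ((Set.ncard_le_ncard hu S.finite_toSet).trans_eq (Set.ncard_coe_finset S) |>.trans hS)

lemma l2_mulVec_le (hΦ : RIP Φ q δ) {u : Fin n → ℝ} {S : Finset (Fin n)}
    (hu : support u ⊆ S) (hS : S.card ≤ q) : l2 (Φ *ᵥ u) ≤ √(1 + δ) * l2 u := by
  rw [← Real.sqrt_sq (l2_nonneg (Φ *ᵥ u)), ← Real.sqrt_sq (l2_nonneg u),
    ← Real.sqrt_mul' _ (sq_nonneg _)]
  exact Real.sqrt_le_sqrt (hΦ.of_support_subset hu hS).2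

section Disjoint

variable {u v : Fin n → ℝ} {S W : Finset (Fin n)}

lemma abs_dotProduct_mulVec_le_half (hΦ : RIP Φ q δ) (hu : support u ⊆ S) (hv : support v ⊆ W)
    (hSW : Disjoint S W) (hq : S.card + W.card ≤ q) :
    |Φ *ᵥ u ⬝ᵥ Φ *ᵥ v| ≤ δ / 2 * (l2 u ^ 2 + l2 v ^ 2) := by
  have horth : u ⬝ᵥ v = 0 := sum_eq_zero fun i _ => by
    by_cases hi : i ∈ S
    · rw [support_subset_iff'.1 hv i (disjoint_left.1 hSW hi), mul_zero]
    · rw [support_subset_iff'.1 hu i hi, zero_mul]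
  have hsupp : ∀ w : Fin n → ℝ, support w ⊆ support u ∪ support v → support w ⊆ ↑(S ∪ W) :=
    fun w hw => hw.trans (by rw [coe_union]; exact Set.union_subset_union hu hv)
  have hcard : (S ∪ W).card ≤ q := (card_union_le S W).trans hq
  -- polarization: `‖u ± v‖² = ‖u‖² + ‖v‖²` while `‖Φ(u + v)‖² - ‖Φ(u - v)‖² = 4 ⟪Φu, Φv⟫`
  have hadd := hΦ.of_support_subset (hsupp (u + v) (support_add u v)) hcard
  have hsub := hΦ.of_support_subset (hsupp (u - v) (support_sub u v)) hcard
  simp only [l2_sq, mulVec_add, mulVec_sub, add_dotProduct, dotProduct_add, sub_dotProduct,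
    dotProduct_sub, dotProduct_comm v u, dotProduct_comm (Φ *ᵥ v) (Φ *ᵥ u), horth] at hadd hsub ⊢
  rw [abs_le]
  constructor <;> linarith [hadd.1, hadd.2, hsub.1, hsub.2]

lemma abs_dotProduct_mulVec_le (hΦ : RIP Φ q δ) (hu : support u ⊆ S) (hv : support v ⊆ W)
    (hSW : Disjoint S W) (hq : S.card + W.card ≤ q) :
    |Φ *ᵥ u ⬝ᵥ Φ *ᵥ v| ≤ δ * (l2 u * l2 v) := by
  rcases eq_or_ne u 0 with rfl | hu0
  · simp [l2]
  rcases eq_or_ne v 0 with rfl | hv0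
  · simp [l2]
  have hu' : 0 < l2 u := (l2_nonneg u).lt_of_ne (Ne.symm (mt l2_eq_zero_iff.1 hu0))
  have hv' : 0 < l2 v := (l2_nonneg v).lt_of_ne (Ne.symm (mt l2_eq_zero_iff.1 hv0))
  have := hΦ.abs_dotProduct_mulVec_le_half ((support_const_smul_subset (l2 u)⁻¹ u).trans hu)
    ((support_const_smul_subset (l2 v)⁻¹ v).trans hv) hSW hq
  rw [mulVec_smul, mulVec_smul, smul_dotProduct, dotProduct_smul, l2_smul, l2_smul,
    abs_of_pos (inv_pos.2 hu'), abs_of_pos (inv_pos.2 hv'), inv_mul_cancel₀ hu'.ne',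
    inv_mul_cancel₀ hv'.ne', smul_eq_mul, smul_eq_mul, abs_mul, abs_mul,
    abs_of_pos (inv_pos.2 hu'), abs_of_pos (inv_pos.2 hv'), inv_mul_le_iff₀ hu',
    inv_mul_le_iff₀ hv'] at this
  linarith [show l2 v * (l2 u * (δ / 2 * (1 ^ 2 + 1 ^ 2))) = δ * (l2 u * l2 v) by ring]

end Disjoint

end RIP

lemma l1_restr_sdiff_le_of_l1_restr_add_le {n : ℕ} {V T₀ : Finset (Fin n)} (hT₀ : T₀ ⊆ V)
    {x h : Fin n → ℝ} (hopt : l1 (restr V (x + h)) ≤ l1 (restr V x)) :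
    l1 (restr (V \ T₀) h) ≤ l1 (restr T₀ h) + 2 * l1 (restr (V \ T₀) x) := by
  have hV : V = T₀ ∪ V \ T₀ := (union_sdiff_of_subset hT₀).symm
  rw [hV, l1_restr_union disjoint_sdiff, l1_restr_union disjoint_sdiff] at hopt
  have hT₀' : l1 (restr T₀ x) - l1 (restr T₀ h) ≤ l1 (restr T₀ (x + h)) := by
    simp only [l1_restr, ← sum_sub_distrib]
    exact sum_le_sum fun i _ => by simpa using abs_sub_abs_le_abs_add (x i) (h i)
  have hV' : l1 (restr (V \ T₀) h) - l1 (restr (V \ T₀) x) ≤ l1 (restr (V \ T₀) (x + h)) := by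
    simp only [l1_restr, ← sum_sub_distrib]
    exact sum_le_sum fun i _ => by simpa [add_comm] using abs_sub_abs_le_abs_add (h i) (x i)
  linarith

lemma l2_mulVec_sub_le {m n : ℕ} {Φ : Matrix (Fin m) (Fin n) ℝ} {y : Fin m → ℝ} {ε : ℝ}
    {u v : Fin n → ℝ} (hu : l2 (y - Φ *ᵥ u) ≤ ε) (hv : l2 (y - Φ *ᵥ v) ≤ ε) :
    l2 (Φ *ᵥ (u - v)) ≤ 2 * ε := by
  have := l2_sub_le (y - Φ *ᵥ v) (y - Φ *ᵥ u)
  rw [sub_sub_sub_cancel_left, ← mulVec_sub] at this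
  linarith

section Head

variable {m n k : ℕ} {Φ : Matrix (Fin m) (Fin n) ℝ} {H T₀ T₁ : Finset (Fin n)} {h : Fin n → ℝ}
  {δ₁ δ₂ μ : ℝ}

lemma abs_dotProduct_mulVec_restr_le (hΦ₁ : RIP Φ (H.card + k) δ₁) (hΦ₂ : RIP Φ (2 * k) δ₂)
    (hμ : μ = √(δ₁ ^ 2 + δ₂ ^ 2)) (hHT₁ : Disjoint H T₁) (hT₁ : T₁.card ≤ k)
    {W : Finset (Fin n)} (hW : Disjoint (H ∪ T₁) W) (hWk : W.card ≤ k) :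
    |Φ *ᵥ restr (H ∪ T₁) h ⬝ᵥ Φ *ᵥ restr W h| ≤ μ * l2 (restr (H ∪ T₁) h) * l2 (restr W h) := by
  have hHW := hΦ₁.abs_dotProduct_mulVec_le (support_restr_subset H h) (support_restr_subset W h)
    (disjoint_union_left.1 hW).1 (by omega)
  have hT₁W := hΦ₂.abs_dotProduct_mulVec_le (support_restr_subset T₁ h) (support_restr_subset W h)
    (disjoint_union_left.1 hW).2 (by omega)
  have hCS : δ₁ * l2 (restr H h) + δ₂ * l2 (restr T₁ h) ≤ μ * l2 (restr (H ∪ T₁) h) := by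
    rw [hμ, ← Real.sqrt_sq (l2_nonneg (restr (H ∪ T₁) h)), l2_restr_union_sq hHT₁]
    exact mul_add_mul_le_sqrt_mul_sqrt _ _ _ _
  have hsum : Φ *ᵥ restr (H ∪ T₁) h = Φ *ᵥ restr H h + Φ *ᵥ restr T₁ h := by
    rw [restr_union hHT₁, mulVec_add]
  rw [hsum, add_dotProduct]
  refine (abs_add_le _ _).trans ((add_le_add hHW hT₁W).trans ?_)
  nlinarith [mul_le_mul_of_nonneg_right hCS (l2_nonneg (restr W h))]

lemma abs_dotProduct_mulVec_restr_compl_le (hk : 1 ≤ k) (hΦ₁ : RIP Φ (H.card + k) δ₁)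
    (hΦ₂ : RIP Φ (2 * k) δ₂) (hμ : μ = √(δ₁ ^ 2 + δ₂ ^ 2)) (hT₁sub : T₁ ⊆ Hᶜ)
    (hT₁card : T₁.card = k) (hT₁ : isLargest (restr Hᶜ h) T₁) :
    |Φ *ᵥ restr (H ∪ T₁) h ⬝ᵥ Φ *ᵥ restr (H ∪ T₁)ᶜ h|
      ≤ μ * l2 (restr (H ∪ T₁) h) * ((√k)⁻¹ * l1 (restr Hᶜ h)) := by
  have hHT₁ : Disjoint H T₁ := (subset_compl_iff_disjoint_right.1 hT₁sub).symm
  have hk' : (0 : ℝ) < k := by exact_mod_cast hk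
  have hbound : ∀ i ∈ (H ∪ T₁)ᶜ, |h i| ≤ (k : ℝ)⁻¹ * l1 (restr T₁ h) := fun i hi => by
    simp only [mem_compl, mem_union, not_or] at hi
    rw [inv_mul_eq_div, le_div_iff₀ hk', mul_comm, ← hT₁card]
    refine card_mul_abs_le_l1_restr fun j hj => ?_
    simpa [restr, hi.1, mem_compl.1 (hT₁sub hj)] using hT₁ j hj i hi.2
  have hshell := le_of_le_l2_restr_blocks hk (u := h) (mul_nonneg (by rw [hμ]; positivity)
    (l2_nonneg _)) (fun W => |Φ *ᵥ restr (H ∪ T₁) h ⬝ᵥ Φ *ᵥ restr W h|)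
    (fun S W hSW => by
      simpa only [restr_union hSW, mulVec_add, dotProduct_add] using abs_add_le _ _)
    (H ∪ T₁)ᶜ (fun W hW hWk => abs_dotProduct_mulVec_restr_le hΦ₁ hΦ₂ hμ hHT₁ hT₁card.le
      (subset_compl_iff_disjoint_left.1 hW) hWk)
    (mul_nonneg (by positivity) (l1_nonneg _)) hbound
  have hsplit : Hᶜ = T₁ ∪ (H ∪ T₁)ᶜ := by
    ext i
    by_cases hi : i ∈ T₁
    · simp [hi, mem_compl.1 (hT₁sub hi)]
    · simp [hi]
  have hkk : √k * (k : ℝ)⁻¹ = (√k)⁻¹ := by rw [← div_eq_mul_inv, Real.sqrt_div_self]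
  refine hshell.trans_eq ?_
  rw [hsplit, l1_restr_union (disjoint_compl_right_iff.2 subset_union_right), ← hkk]
  ring

lemma mul_l2_restr_le_of_tube_cone (hk : 1 ≤ k) (hΦ₁ : RIP Φ (H.card + k) δ₁)
    (hΦ₂ : RIP Φ (2 * k) δ₂) (hμ : μ = √(δ₁ ^ 2 + δ₂ ^ 2)) (hT₀ : T₀ ⊆ H) (hT₀card : T₀.card ≤ k)
    (hT₁sub : T₁ ⊆ Hᶜ) (hT₁card : T₁.card = k) (hT₁ : isLargest (restr Hᶜ h) T₁)
    {η ρ : ℝ} (hρ : 0 ≤ ρ) (htube : l2 (Φ *ᵥ h) ≤ η)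
    (hcone : l1 (restr Hᶜ h) ≤ l1 (restr T₀ h) + 2 * ρ) :
    (1 - δ₁ - μ) * l2 (restr (H ∪ T₁) h) ≤ √(1 + δ₁) * η + 2 * μ * ((√k)⁻¹ * ρ) := by
  set a := restr (H ∪ T₁) h
  set A := l2 a
  have hk' : (0 : ℝ) < √k := Real.sqrt_pos.2 (by exact_mod_cast hk)
  have hA : 0 ≤ A := l2_nonneg a
  have hη : 0 ≤ η := (l2_nonneg _).trans htube
  have hμ0 : 0 ≤ μ := hμ ▸ Real.sqrt_nonneg _
  have hcard : (H ∪ T₁).card ≤ H.card + k := by have := card_union_le H T₁; omega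
  have hlow : (1 - δ₁) * A ^ 2 ≤ Φ *ᵥ a ⬝ᵥ Φ *ᵥ a :=
    l2_sq (Φ *ᵥ a) ▸ (hΦ₁.of_support_subset (support_restr_subset _ h) hcard).1
  have hsplit : Φ *ᵥ a ⬝ᵥ Φ *ᵥ a
      = Φ *ᵥ a ⬝ᵥ Φ *ᵥ h - Φ *ᵥ a ⬝ᵥ Φ *ᵥ restr (H ∪ T₁)ᶜ h := by
    have hΦh : Φ *ᵥ h = Φ *ᵥ a + Φ *ᵥ restr (H ∪ T₁)ᶜ h := by
      rw [← mulVec_add, restr_add_restr_compl]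
    rw [hΦh, dotProduct_add]
    ring
  have hhead : Φ *ᵥ a ⬝ᵥ Φ *ᵥ h ≤ √(1 + δ₁) * A * η :=
    (le_abs_self _).trans <| (abs_dotProduct_le _ _).trans <| mul_le_mul
      (hΦ₁.l2_mulVec_le (support_restr_subset _ h) hcard) htube (l2_nonneg _) (by positivity)
  have htail := abs_dotProduct_mulVec_restr_compl_le hk hΦ₁ hΦ₂ hμ hT₁sub hT₁card hT₁
  have hT₀A : l1 (restr T₀ h) ≤ √k * A := by
    refine (l1_restr_le_sqrt_card_mul_l2 T₀ h).trans
      (mul_le_mul ?_ ?_ (l2_nonneg _) (by positivity))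
    · exact Real.sqrt_le_sqrt (by exact_mod_cast hT₀card)
    · exact l2_restr_mono (hT₀.trans subset_union_left) h
  have hoff : (√k)⁻¹ * l1 (restr Hᶜ h) ≤ A + 2 * ((√k)⁻¹ * ρ) := by
    rw [inv_mul_le_iff₀ hk']
    nlinarith [mul_inv_cancel₀ hk'.ne']
  have hquad : (1 - δ₁ - μ) * A ^ 2 ≤ A * (√(1 + δ₁) * η + 2 * μ * ((√k)⁻¹ * ρ)) := by
    nlinarith [neg_abs_le (Φ *ᵥ a ⬝ᵥ Φ *ᵥ restr (H ∪ T₁)ᶜ h),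
      mul_le_mul_of_nonneg_left hoff (mul_nonneg hμ0 hA)]
  rcases hA.eq_or_lt with hA0 | hApos
  · rw [← hA0, mul_zero]; positivity
  · rw [sq, ← mul_assoc, mul_comm _ A] at hquad
    exact le_of_mul_le_mul_left hquad hApos

end Head

theorem ibpdn_head_bound_general
    {m n : ℕ} (Φ : Matrix (Fin m) (Fin n) ℝ)
    (T : Finset (Fin n)) (s k : ℕ) (hs : T.card = s) (hk : 1 ≤ k)
    (δsk δk : ℝ)
    (hRIPsk : RIP Φ (s + 2 * k) δsk) (hRIPk : RIP Φ (2 * k) δk)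
    (hcond : δk ^ 2 + 2 * δsk < 1)
    (x : Fin n → ℝ) (ε : ℝ)
    (y : Fin m → ℝ) (hy : l2 (y - Φ.mulVec x) ≤ ε)
    (xstar : Fin n → ℝ) (hsol : solvesIBPDN Φ y ε T xstar)
    (h : Fin n → ℝ) (hh : h = xstar - x)
    (r : Fin n → ℝ) (hr : r = x - restr T x)
    (T₀ : Finset (Fin n)) (hT₀sub : T₀ ⊆ Tᶜ) (hT₀card : T₀.card = k)
    (T₁ : Finset (Fin n)) (hT₁sub : T₁ ⊆ (T ∪ T₀)ᶜ) (hT₁card : T₁.card = k)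
    (hT₁ : isLargest (restr (T ∪ T₀)ᶜ h) T₁)
    (μ : ℝ) (hμ : μ = Real.sqrt (δsk ^ 2 + δk ^ 2)) :
    l2 (restr (T ∪ T₀ ∪ T₁) h) ≤
      (2 * Real.sqrt (1 + δsk) / (1 - δsk - μ)) * ε
        + (2 * μ / (1 - δsk - μ)) * ((Real.sqrt k)⁻¹ * l1 (r - restr T₀ r)) := by
  have htail : r - restr T₀ r = restr (T ∪ T₀)ᶜ x := by
    subst hr
    funext i
    by_cases hT : i ∈ T <;> by_cases hT₀ : i ∈ T₀ <;> simp [restr, hT, hT₀]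
  have hcone := l1_restr_sdiff_le_of_l1_restr_add_le hT₀sub (x := x) (h := h)
    (by rw [hh, add_sub_cancel]; exact hsol.2 x hy)
  rw [sdiff_eq_inter_compl, ← compl_union, ← htail] at hcone
  have hcard : (T ∪ T₀).card + k ≤ s + 2 * k := by have := card_union_le T T₀; omega
  have key := mul_l2_restr_le_of_tube_cone hk (hRIPsk.mono hcard) hRIPk hμ subset_union_right
    hT₀card.le hT₁sub hT₁card hT₁ (l1_nonneg _) (hh ▸ l2_mulVec_sub_le hsol.1 hy) hcone
  have hμlt : μ < 1 - δsk := by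
    rw [hμ, Real.sqrt_lt' (by nlinarith [sq_nonneg δk])]
    nlinarith
  rw [div_mul_eq_mul_div, div_mul_eq_mul_div, ← add_div, le_div_iff₀ (by linarith)]
  linarith

/-- **Bound on the ℓ₂ norm of the iBPDN error on `T ∪ T₀ ∪ T₁`.** -/
theorem ibpdn_head_bound
    {m n : ℕ} (Φ : Matrix (Fin m) (Fin n) ℝ)
    (T : Finset (Fin n)) (s k : ℕ) (hs : T.card = s) (hk : 1 ≤ k)
    (δsk δk : ℝ) (hδsk : δsk ∈ Set.Ioo (0 : ℝ) 1) (hδk : δk ∈ Set.Ioo (0 : ℝ) 1)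
    (hRIPsk : RIP Φ (s + 2 * k) δsk) (hRIPk : RIP Φ (2 * k) δk)
    (hcond : δk ^ 2 + 2 * δsk < 1)
    (x : Fin n → ℝ) (ε : ℝ) (hε : 0 ≤ ε)
    (y : Fin m → ℝ) (hy : l2 (y - Φ.mulVec x) ≤ ε)
    (xstar : Fin n → ℝ) (hsol : solvesIBPDN Φ y ε T xstar)
    (h : Fin n → ℝ) (hh : h = xstar - x)
    (r : Fin n → ℝ) (hr : r = x - restr T x)
    (T₀ : Finset (Fin n)) (hT₀sub : T₀ ⊆ Tᶜ) (hT₀card : T₀.card = k)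
    (hT₀ : isLargest r T₀)
    (T₁ : Finset (Fin n)) (hT₁sub : T₁ ⊆ (T ∪ T₀)ᶜ) (hT₁card : T₁.card = k)
    (hT₁ : isLargest (restr (T ∪ T₀)ᶜ h) T₁)
    (μ : ℝ) (hμ : μ = Real.sqrt (δsk ^ 2 + δk ^ 2)) :
    l2 (restr (T ∪ T₀ ∪ T₁) h) ≤
      (2 * Real.sqrt (1 + δsk) / (1 - δsk - μ)) * ε
        + (2 * μ / (1 - δsk - μ)) * ((Real.sqrt k)⁻¹ * l1 (r - restr T₀ r)) :=
  ibpdn_head_bound_general Φ T s k hs hk δsk δk hRIPsk hRIPk hcond x ε y hy xstar hsol h hh r hr T₀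
    hT₀sub hT₀card T₁ hT₁sub hT₁card hT₁ μ hμ
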